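/- For two CDFs G and H on [0,1] with G(0)=H(0)=0 and G(1)=H(1)=1, the integral ∫₀¹ |G(u) − H(u)| du is at most 1/2 when H(u) = u is the uniform CDF and G is any CDF on [0,1]; consequently the uniform 1-Wasserstein measure UWD₁ = 2∫₀¹|G(u) − u| du lies in [0,1]. -/
import Mathlib


open MeasureTheory intervalIntegral

/-- For a CDF `G` of a distribution on `[0,1]` (nondecreasing with values in
`[0,1]`), `∫₀¹ |G u − u| du ≤ 1/2`, hence `UWD₁ = 2∫₀¹|G u − u| du ∈ [0,1]`. -/
theorem uwd1_bounds
    (G : ℝ → ℝ) (hmono : MonotoneOn G (Set.Icc (0:ℝ) 1))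
    (hrange : ∀ u ∈ Set.Icc (0:ℝ) 1, G u ∈ Set.Icc (0:ℝ) 1) :
    (∫ u in (0:ℝ)..1, |G u - u|) ≤ 1/2 ∧
      2 * (∫ u in (0:ℝ)..1, |G u - u|) ∈ Set.Icc (0:ℝ) 1 := by
  have huIcc : Set.uIcc (0:ℝ) 1 = Set.Icc (0:ℝ) 1 := Set.uIcc_of_le (by norm_num)
  have hGint : IntervalIntegrable G volume 0 1 :=
    MonotoneOn.intervalIntegrable (huIcc ▸ hmono)
  have hanti : AntitoneOn (fun u => G (1 - u)) (Set.Icc (0:ℝ) 1) := by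
    intro x hx y hy hxy
    exact hmono ⟨by linarith [hy.2], by linarith [hy.1]⟩
      ⟨by linarith [hx.2], by linarith [hx.1]⟩ (by linarith)
  have hG'int : IntervalIntegrable (fun u => G (1 - u)) volume 0 1 :=
    AntitoneOn.intervalIntegrable (huIcc ▸ hanti)
  have h1 : IntervalIntegrable (fun u => |G u - u|) volume 0 1 :=
    (hGint.sub intervalIntegrable_id).abs
  have h2 : IntervalIntegrable (fun u => |G (1 - u) - (1 - u)|) volume 0 1 :=
    (hG'int.sub (intervalIntegrable_const.sub intervalIntegrable_id)).abs
  -- pointwise key inequality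
  have key : ∀ u ∈ Set.Icc (0:ℝ) 1, |G u - u| + |G (1 - u) - (1 - u)| ≤ 1 := by
    intro u hu
    have hu1 : (1 - u) ∈ Set.Icc (0:ℝ) 1 := ⟨by linarith [hu.2], by linarith [hu.1]⟩
    have ha := hrange u hu
    have hb := hrange (1 - u) hu1
    rcases le_total u (1 - u) with h | h
    · have hab : G u ≤ G (1 - u) := hmono hu hu1 h
      rcases abs_cases (G u - u) with ⟨e1, _⟩ | ⟨e1, _⟩ <;>
        rcases abs_cases (G (1 - u) - (1 - u)) with ⟨e2, _⟩ | ⟨e2, _⟩ <;>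
        rw [e1, e2] <;>
        [skip; skip; skip; skip] <;>
        first
          | linarith [ha.1, ha.2, hb.1, hb.2]
          | linarith [ha.1, ha.2, hb.1, hb.2, hab, hu.1, hu.2]
    · have hab : G (1 - u) ≤ G u := hmono hu1 hu h
      rcases abs_cases (G u - u) with ⟨e1, _⟩ | ⟨e1, _⟩ <;>
        rcases abs_cases (G (1 - u) - (1 - u)) with ⟨e2, _⟩ | ⟨e2, _⟩ <;>
        rw [e1, e2] <;>
        first
          | linarith [ha.1, ha.2, hb.1, hb.2]
          | linarith [ha.1, ha.2, hb.1, hb.2, hab, hu.1, hu.2]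
  have hrefl : (∫ u in (0:ℝ)..1, |G (1 - u) - (1 - u)|) = ∫ u in (0:ℝ)..1, |G u - u| := by
    have := intervalIntegral.integral_comp_sub_left (a := (0:ℝ)) (b := 1)
      (fun u => |G u - u|) 1
    simpa using this
  have hsum : (∫ u in (0:ℝ)..1, (|G u - u| + |G (1 - u) - (1 - u)|))
      ≤ ∫ u in (0:ℝ)..1, (1:ℝ) := by
    apply intervalIntegral.integral_mono_on (by norm_num) (h1.add h2)
      intervalIntegrable_const
    intro u hu
    exact key u hu
  rw [intervalIntegral.integral_add h1 h2, hrefl] at hsum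
  simp only [intervalIntegral.integral_const, smul_eq_mul] at hsum
  have hle : (∫ u in (0:ℝ)..1, |G u - u|) ≤ 1/2 := by linarith
  have hnonneg : 0 ≤ ∫ u in (0:ℝ)..1, |G u - u| :=
    intervalIntegral.integral_nonneg (by norm_num) (fun u _ => abs_nonneg _)
  exact ⟨hle, ⟨by linarith, by linarith⟩⟩
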